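/- Uniqueness for the Lane–Emden equation: let N ≥ 1, let 1 ≤ q < 2 and let Ω ⊆ ℝ^N be a bounded open set. If u₁ and u₂ are both extended classical Lane–Emden solutions on Ω, then u₁ = u₂. -/

import Mathlib

/-! With `β = 2 - q ∈ (0, 1]`, the power `v = u ^ β` of a solution satisfies
`-Δv = β + ((1 - β) / β) ‖∇v‖² / v`, and the sign of the gradient term makes a comparison
principle work. If `v₂ > v₁ + δ` somewhere, the least `m` with `v₂ ≤ δ + m v₁` exceeds `1` and is
attained at a point `x₀` of the compact set `{v₂ ≥ δ} ⊆ Ω`. There `∇v₂ = m ∇v₁` and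
`Δv₂ ≤ m Δv₁`, and the equation turns this into `β² v₁ v₂ (m - 1) + (1 - β) m ‖∇v₁‖² δ ≤ 0`,
which is absurd. Hence `v₂ ≤ v₁`, and by symmetry `u₁ = u₂`. -/

open MeasureTheory

/-- The Laplacian of a function on `ℝ^N`, computed as the sum of the second
partial derivatives along the coordinate directions. -/
noncomputable def lap {N : ℕ} (f : EuclideanSpace ℝ (Fin N) → ℝ)
    (x : EuclideanSpace ℝ (Fin N)) : ℝ :=
  ∑ i : Fin N, fderiv ℝ (fun y => fderiv ℝ f y (EuclideanSpace.single i 1)) x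
    (EuclideanSpace.single i 1)

/-- An extended classical Lane–Emden solution on `Ω ⊆ ℝ^N`: a Lipschitz function
`w : ℝ^N → ℝ` vanishing identically outside `Ω`, positive and twice continuously
differentiable on `Ω`, satisfying `-Δw = w^(q-1)` on `Ω`. -/
def IsExtLaneEmdenSolution {N : ℕ} (q : ℝ) (Ω : Set (EuclideanSpace ℝ (Fin N)))
    (w : EuclideanSpace ℝ (Fin N) → ℝ) : Prop :=
  (∃ K : NNReal, LipschitzWith K w) ∧ (∀ x ∉ Ω, w x = 0) ∧
    (∀ x ∈ Ω, 0 < w x) ∧ ContDiffOn ℝ 2 w Ω ∧ ∀ x ∈ Ω, -lap w x = w x ^ (q - 1)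

open Filter Topology InnerProductSpace Laplacian

theorem IsLocalMax.second_deriv_nonpos {f f' : ℝ → ℝ} {a A : ℝ} (hmax : IsLocalMax f a)
    (hf : ∀ᶠ t in 𝓝 a, HasDerivAt f (f' t) t) (hf' : HasDerivAt f' A a) : A ≤ 0 := by
  by_contra! hA
  have hderiv : deriv f =ᶠ[𝓝 a] f' := hf.mono fun t ht => ht.deriv
  have hmin : IsLocalMin f a :=
    isLocalMin_of_deriv_deriv_pos (by rwa [hderiv.deriv_eq, hf'.deriv])
      (hf.self_of_nhds.deriv ▸ hmax.deriv_eq_zero) hf.self_of_nhds.continuousAt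
  have hconst : f =ᶠ[𝓝 a] fun _ => f a := by
    filter_upwards [hmax, hmin] with t h₁ h₂ using le_antisymm h₁ h₂
  have hA0 : A = 0 := by
    rw [← hf'.deriv, ← hderiv.deriv_eq, hconst.deriv.deriv_eq]
    simp
  exact hA.ne' hA0

section SecondDirectionalDerivative

variable {E : Type*} [NormedAddCommGroup E] [NormedSpace ℝ E] {f u : E → ℝ} {x : E}

theorem ContDiffAt.differentiableAt_fderiv_apply (hf : ContDiffAt ℝ 2 f x) (e : E) :
    DifferentiableAt ℝ (fun y => fderiv ℝ f y e) x :=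
  ((hf.fderiv_right (m := 1) le_rfl).differentiableAt one_ne_zero).clm_apply
    (differentiableAt_const e)

theorem IsLocalMax.fderiv_fderiv_apply_nonpos (hmax : IsLocalMax f x) (hf : ContDiffAt ℝ 2 f x)
    (e : E) : fderiv ℝ (fun y => fderiv ℝ f y e) x e ≤ 0 := by
  set L : ℝ → E := fun t => x + t • e
  have hL : ∀ t, HasDerivAt L e t := fun t => by
    simpa [L] using ((hasDerivAt_id t).smul_const e).const_add x
  have hL0 : L 0 = x := by simp [L]
  have hLt : Tendsto L (𝓝 0) (𝓝 x) := hL0 ▸ (hL 0).continuousAt.tendsto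
  refine IsLocalMax.second_deriv_nonpos (f := f ∘ L) (a := 0)
    (f' := fun t => fderiv ℝ f (L t) e) ?_ ?_ ?_
  · exact (hL0 ▸ hmax).comp_continuous (hL 0).continuousAt
  · filter_upwards [hLt.eventually (hf.eventually (by simp))] with t ht
    exact (ht.differentiableAt (by simp)).hasFDerivAt.comp_hasDerivAt t (hL t)
  · exact (hf.differentiableAt_fderiv_apply e).hasFDerivAt.comp_hasDerivAt_of_eq 0 (hL 0) hL0.symm

theorem fderiv_fderiv_comp_apply {φ φ' : ℝ → ℝ} {φ'' : ℝ} (hu : ContDiffAt ℝ 2 u x)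
    (hφ : ∀ᶠ t in 𝓝 (u x), HasDerivAt φ (φ' t) t) (hφ' : HasDerivAt φ' φ'' (u x)) (e : E) :
    fderiv ℝ (fun y => fderiv ℝ (φ ∘ u) y e) x e =
      φ' (u x) * fderiv ℝ (fun y => fderiv ℝ u y e) x e + φ'' * fderiv ℝ u x e ^ 2 := by
  have hud : DifferentiableAt ℝ u x := hu.differentiableAt (by simp)
  have hev : (fun y => fderiv ℝ (φ ∘ u) y e) =ᶠ[𝓝 x] fun y => φ' (u y) * fderiv ℝ u y e := by
    filter_upwards [hu.continuousAt.tendsto.eventually hφ, hu.eventually (by simp)]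
      with y hφy huy
    rw [(hφy.comp_hasFDerivAt y (huy.differentiableAt (by simp)).hasFDerivAt).fderiv]
    rfl
  have hprod : HasFDerivAt (fun y => φ' (u y) * fderiv ℝ u y e) _ x :=
    (hφ'.comp_hasFDerivAt x hud.hasFDerivAt).mul (hu.differentiableAt_fderiv_apply e).hasFDerivAt
  rw [hev.fderiv_eq, hprod.fderiv]
  simp only [add_apply, smul_apply, smul_eq_mul, Function.comp_apply]
  ring

end SecondDirectionalDerivative

section Laplacian

variable {N : ℕ} {f g u : EuclideanSpace ℝ (Fin N) → ℝ} {x : EuclideanSpace ℝ (Fin N)}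

theorem sum_sq_apply_single_eq_norm_sq (L : EuclideanSpace ℝ (Fin N) →L[ℝ] ℝ) :
    ∑ i, L (EuclideanSpace.single i 1) ^ 2 = ‖L‖ ^ 2 := by
  set w := (toDual ℝ _).symm L
  have hL : ∀ v, L v = inner ℝ w v := fun v => by simp [w]
  rw [← (toDual ℝ _).symm.norm_map L, EuclideanSpace.norm_eq, Real.sq_sqrt (by positivity)]
  simp only [hL, EuclideanSpace.inner_single_right]
  simp [w]

theorem lap_eq_laplacian (hf : ContDiffAt ℝ 2 f x) : lap f x = Δ f x := by
  have hd : DifferentiableAt ℝ (fderiv ℝ f) x :=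
    (hf.fderiv_right (m := 1) le_rfl).differentiableAt one_ne_zero
  rw [laplacian_eq_iteratedFDeriv_orthonormalBasis f (EuclideanSpace.basisFun (Fin N) ℝ)]
  simp [lap, iteratedFDeriv_two_apply, fderiv_clm_apply hd (differentiableAt_const _)]

theorem lap_smul (c : ℝ) (hf : ContDiffAt ℝ 2 f x) : lap (c • f) x = c * lap f x := by
  have hcf : ContDiffAt ℝ 2 (c • f) x := hf.const_smul c
  rw [lap_eq_laplacian hcf, laplacian_smul c hf, lap_eq_laplacian hf, smul_eq_mul]

theorem lap_nonpos_of_isLocalMax (hmax : IsLocalMax f x) (hf : ContDiffAt ℝ 2 f x) :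
    lap f x ≤ 0 :=
  Finset.sum_nonpos fun _ _ => hmax.fderiv_fderiv_apply_nonpos hf _

theorem lap_le_of_isLocalMax_sub (hmax : IsLocalMax (f - g) x) (hf : ContDiffAt ℝ 2 f x)
    (hg : ContDiffAt ℝ 2 g x) : lap f x ≤ lap g x := by
  have hfg : ContDiffAt ℝ 2 (f - g) x := hf.sub hg
  have h := lap_nonpos_of_isLocalMax hmax hfg
  rw [lap_eq_laplacian hfg, hf.laplacian_sub hg, ← lap_eq_laplacian hf,
    ← lap_eq_laplacian hg] at h
  linarith

theorem lap_comp {φ φ' : ℝ → ℝ} {φ'' : ℝ} (hu : ContDiffAt ℝ 2 u x)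
    (hφ : ∀ᶠ t in 𝓝 (u x), HasDerivAt φ (φ' t) t) (hφ' : HasDerivAt φ' φ'' (u x)) :
    lap (φ ∘ u) x = φ' (u x) * lap u x + φ'' * ‖fderiv ℝ u x‖ ^ 2 := by
  rw [lap, lap, ← sum_sq_apply_single_eq_norm_sq, Finset.mul_sum, Finset.mul_sum,
    ← Finset.sum_add_distrib]
  exact Finset.sum_congr rfl fun i _ => fderiv_fderiv_comp_apply hu hφ hφ' _

theorem lap_rpow (hu : ContDiffAt ℝ 2 u x) (hux : 0 < u x) (β : ℝ) :
    lap (fun y => u y ^ β) x =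
      β * u x ^ (β - 1) * lap u x + β * (β - 1) * u x ^ (β - 2) * ‖fderiv ℝ u x‖ ^ 2 := by
  have hφ : ∀ᶠ t in 𝓝 (u x), HasDerivAt (· ^ β) (β * t ^ (β - 1)) t := by
    filter_upwards [lt_mem_nhds hux] with t ht
    exact Real.hasDerivAt_rpow_const (Or.inl ht.ne')
  have hφ' : HasDerivAt (fun t => β * t ^ (β - 1)) (β * ((β - 1) * u x ^ (β - 2))) (u x) := by
    refine ((Real.hasDerivAt_rpow_const (Or.inl hux.ne')).const_mul β).congr_deriv ?_
    rw [sub_sub, one_add_one_eq_two]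
  rw [show (fun y => u y ^ β) = (· ^ β) ∘ u from rfl, lap_comp hu hφ hφ']
  ring

end Laplacian

section Comparison

variable {X : Type*} [MetricSpace X] [ProperSpace X]

theorem exists_touching_multiple {Ω : Set X} (hΩ : Bornology.IsBounded Ω) {v₁ v₂ : X → ℝ}
    (hv₁ : Continuous v₁) (hv₂ : Continuous v₂) (hv₁pos : ∀ x ∈ Ω, 0 < v₁ x)
    (hv₁nonneg : ∀ x, 0 ≤ v₁ x) (hv₂Ω : ∀ x ∉ Ω, v₂ x ≤ 0) {δ : ℝ} (hδ : 0 < δ) {x : X}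
    (hx : v₁ x + δ < v₂ x) :
    ∃ x₀ ∈ Ω, ∃ m > 1, v₂ x₀ = δ + m * v₁ x₀ ∧ ∀ y, v₂ y ≤ δ + m * v₁ y := by
  set K := {y | δ ≤ v₂ y}
  have hKΩ : K ⊆ Ω := fun y hy => by
    by_contra hyΩ
    exact (hv₂Ω y hyΩ).not_gt (hδ.trans_le hy)
  have hK : IsCompact K :=
    Metric.isCompact_of_isClosed_isBounded (isClosed_le continuous_const hv₂) (hΩ.subset hKΩ)
  have hxK : x ∈ K := by
    change δ ≤ v₂ x
    linarith [hv₁nonneg x]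
  obtain ⟨x₀, hx₀K, hmax⟩ := hK.exists_isMaxOn ⟨x, hxK⟩
    ((hv₂.sub continuous_const).continuousOn.div hv₁.continuousOn
      fun y hy => (hv₁pos y (hKΩ hy)).ne')
  have hratio : ∀ y ∈ K, v₂ y - δ ≤ (v₂ x₀ - δ) / v₁ x₀ * v₁ y := fun y hy =>
    (div_le_iff₀ (hv₁pos y (hKΩ hy))).mp (hmax hy)
  refine ⟨x₀, hKΩ hx₀K, (v₂ x₀ - δ) / v₁ x₀, ?_, ?_, fun y => ?_⟩
  · have := hratio x hxK
    nlinarith [hv₁pos x (hKΩ hxK)]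
  · rw [div_mul_cancel₀ _ (hv₁pos x₀ (hKΩ hx₀K)).ne']
    ring
  · by_cases hy : y ∈ K
    · linarith [hratio y hy]
    · have hm : 0 ≤ (v₂ x₀ - δ) / v₁ x₀ := div_nonneg (sub_nonneg.mpr hx₀K) (hv₁nonneg x₀)
      have : v₂ y < δ := not_le.mp hy
      nlinarith [hv₁nonneg y]

end Comparison

variable {N : ℕ}

/-- For a Lane–Emden solution `u` and `β = 2 - q`, `v = u ^ β` solves
`-Δv = β + ((1 - β) / β) ‖∇v‖² / v` in `Ω`; `lap_eq` is this equation multiplied by `β v`. -/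
structure IsTransformedLaneEmdenSolution (β : ℝ) (Ω : Set (EuclideanSpace ℝ (Fin N)))
    (v : EuclideanSpace ℝ (Fin N) → ℝ) : Prop where
  continuous : Continuous v
  eq_zero_of_notMem : ∀ x ∉ Ω, v x = 0
  pos : ∀ x ∈ Ω, 0 < v x
  contDiffAt : ∀ x ∈ Ω, ContDiffAt ℝ 2 v x
  lap_eq : ∀ x ∈ Ω, β * v x * lap v x = (β - 1) * ‖fderiv ℝ v x‖ ^ 2 - β ^ 2 * v x

namespace IsTransformedLaneEmdenSolution

variable {β : ℝ} {Ω : Set (EuclideanSpace ℝ (Fin N))} {v₁ v₂ : EuclideanSpace ℝ (Fin N) → ℝ}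

theorem nonneg (hv : IsTransformedLaneEmdenSolution β Ω v₁) (x : EuclideanSpace ℝ (Fin N)) :
    0 ≤ v₁ x := by
  by_cases hx : x ∈ Ω
  · exact (hv.pos x hx).le
  · exact (hv.eq_zero_of_notMem x hx).ge

theorem false_of_touching (hv₁ : IsTransformedLaneEmdenSolution β Ω v₁)
    (hv₂ : IsTransformedLaneEmdenSolution β Ω v₂) (hβ₀ : 0 < β) (hβ₁ : β ≤ 1)
    {x₀ : EuclideanSpace ℝ (Fin N)} (hx₀ : x₀ ∈ Ω) {m δ : ℝ} (hm : 1 < m) (hδ : 0 < δ)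
    (htouch : v₂ x₀ = δ + m * v₁ x₀) (hle : ∀ y, v₂ y ≤ δ + m * v₁ y) : False := by
  have hC₁ := hv₁.contDiffAt x₀ hx₀
  have hC₂ := hv₂.contDiffAt x₀ hx₀
  have hd₁ : DifferentiableAt ℝ v₁ x₀ := hC₁.differentiableAt (by simp)
  have hmax : IsLocalMax (v₂ - m • v₁) x₀ := Eventually.of_forall fun y => by
    simp only [Pi.sub_apply, Pi.smul_apply, smul_eq_mul]
    linarith [hle y]
  have hgrad : fderiv ℝ v₂ x₀ = m • fderiv ℝ v₁ x₀ := by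
    have h := hmax.fderiv_eq_zero
    rwa [fderiv_sub (hC₂.differentiableAt (by simp)) (hd₁.const_smul m),
      fderiv_const_smul hd₁, sub_eq_zero] at h
  have hlap : lap v₂ x₀ ≤ m * lap v₁ x₀ :=
    lap_smul m hC₁ ▸ lap_le_of_isLocalMax_sub hmax hC₂ (hC₁.const_smul m)
  have e₁ := hv₁.lap_eq x₀ hx₀
  have e₂ := hv₂.lap_eq x₀ hx₀
  rw [hgrad, norm_smul, mul_pow, Real.norm_eq_abs, sq_abs] at e₂
  have hab : 0 < β * v₁ x₀ * v₂ x₀ := by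
    have := hv₁.pos x₀ hx₀
    have := hv₂.pos x₀ hx₀
    positivity
  have key := mul_le_mul_of_nonneg_left hlap hab.le
  have hid : β * v₁ x₀ * v₂ x₀ * (β * (m - 1)) + (1 - β) * m * ‖fderiv ℝ v₁ x₀‖ ^ 2 * δ =
      β * v₁ x₀ * v₂ x₀ * lap v₂ x₀ - β * v₁ x₀ * v₂ x₀ * (m * lap v₁ x₀) := by
    linear_combination
      (-v₁ x₀) * e₂ + m * v₂ x₀ * e₁ - (1 - β) * m * ‖fderiv ℝ v₁ x₀‖ ^ 2 * htouch
  have hpos : 0 < β * v₁ x₀ * v₂ x₀ * (β * (m - 1)) := mul_pos hab (mul_pos hβ₀ (sub_pos.mpr hm))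
  have hnonneg : 0 ≤ (1 - β) * m * ‖fderiv ℝ v₁ x₀‖ ^ 2 * δ :=
    mul_nonneg (mul_nonneg (mul_nonneg (sub_nonneg.mpr hβ₁) (zero_lt_one.trans hm).le)
      (sq_nonneg _)) hδ.le
  linarith

theorem le (hv₁ : IsTransformedLaneEmdenSolution β Ω v₁)
    (hv₂ : IsTransformedLaneEmdenSolution β Ω v₂) (hβ₀ : 0 < β) (hβ₁ : β ≤ 1)
    (hΩ : Bornology.IsBounded Ω) : v₂ ≤ v₁ := by
  intro x
  refine le_of_forall_pos_le_add fun δ hδ => ?_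
  by_contra! hx
  obtain ⟨x₀, hx₀, m, hm, htouch, hle⟩ := exists_touching_multiple hΩ hv₁.continuous
    hv₂.continuous hv₁.pos hv₁.nonneg (fun y hy => (hv₂.eq_zero_of_notMem y hy).le) hδ hx
  exact hv₁.false_of_touching hv₂ hβ₀ hβ₁ hx₀ hm hδ htouch hle

end IsTransformedLaneEmdenSolution

namespace IsExtLaneEmdenSolution

variable {q : ℝ} {Ω : Set (EuclideanSpace ℝ (Fin N))} {u : EuclideanSpace ℝ (Fin N) → ℝ}

theorem nonneg (h : IsExtLaneEmdenSolution q Ω u) (x : EuclideanSpace ℝ (Fin N)) : 0 ≤ u x := by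
  by_cases hx : x ∈ Ω
  · exact (h.2.2.1 x hx).le
  · exact (h.2.1 x hx).ge

theorem isTransformed_rpow (h : IsExtLaneEmdenSolution q Ω u) (hΩ : IsOpen Ω) (hq : q < 2) :
    IsTransformedLaneEmdenSolution (2 - q) Ω (fun x => u x ^ (2 - q)) := by
  obtain ⟨⟨_, hlip⟩, hzero, hpos, hC, hpde⟩ := h
  have hβ : 0 < 2 - q := by linarith
  refine ⟨hlip.continuous.rpow_const fun _ => Or.inr hβ.le,
    fun x hx => by simp [hzero x hx, hβ.ne'], fun x hx => Real.rpow_pos_of_pos (hpos x hx) _,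
    fun x hx => (hC.contDiffAt (hΩ.mem_nhds hx)).rpow_const_of_ne (hpos x hx).ne',
    fun x hx => ?_⟩
  set β := 2 - q
  have hux := hpos x hx
  have hCx := hC.contDiffAt (hΩ.mem_nhds hx)
  have hD : fderiv ℝ (fun y => u y ^ β) x = (β * u x ^ (β - 1)) • fderiv ℝ u x :=
    ((hCx.differentiableAt (by simp)).hasFDerivAt.rpow_const (Or.inl hux.ne')).fderiv
  have hLu : lap u x = -u x ^ (q - 1) := by linarith [hpde x hx]
  have h₁ : u x ^ (β - 1) * u x ^ (q - 1) = 1 := by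
    rw [← Real.rpow_add hux, show β - 1 + (q - 1) = 0 by ring, Real.rpow_zero]
  have h₂ : u x ^ β * u x ^ (β - 2) = (u x ^ (β - 1)) ^ 2 := by
    rw [← Real.rpow_add hux, ← Real.rpow_natCast, ← Real.rpow_mul hux.le]
    ring_nf
  rw [lap_rpow hCx hux, hD, norm_smul, mul_pow, Real.norm_eq_abs, sq_abs]
  linear_combination β ^ 2 * u x ^ β * u x ^ (β - 1) * hLu - β ^ 2 * u x ^ β * h₁ +
    β ^ 2 * (β - 1) * ‖fderiv ℝ u x‖ ^ 2 * h₂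

end IsExtLaneEmdenSolution

theorem lane_emden_uniqueness_general {N : ℕ} {q : ℝ} (hq1 : 1 ≤ q) (hq2 : q < 2)
    {Ω : Set (EuclideanSpace ℝ (Fin N))} (hΩo : IsOpen Ω) (hΩb : Bornology.IsBounded Ω)
    {u₁ u₂ : EuclideanSpace ℝ (Fin N) → ℝ}
    (h₁ : IsExtLaneEmdenSolution q Ω u₁) (h₂ : IsExtLaneEmdenSolution q Ω u₂) :
    u₁ = u₂ := by
  have hβ₀ : 0 < 2 - q := by linarith
  have hβ₁ : 2 - q ≤ 1 := by linarith
  have hv₁ := h₁.isTransformed_rpow hΩo hq2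
  have hv₂ := h₂.isTransformed_rpow hΩo hq2
  funext x
  exact Real.rpow_left_injOn hβ₀.ne' (h₁.nonneg x) (h₂.nonneg x)
    (le_antisymm (hv₂.le hv₁ hβ₀ hβ₁ hΩb x) (hv₁.le hv₂ hβ₀ hβ₁ hΩb x))

/-- **Uniqueness for the Lane–Emden equation** on a bounded open set. -/
theorem lane_emden_uniqueness {N : ℕ} (hN : 1 ≤ N) {q : ℝ} (hq1 : 1 ≤ q) (hq2 : q < 2)
    {Ω : Set (EuclideanSpace ℝ (Fin N))} (hΩo : IsOpen Ω) (hΩb : Bornology.IsBounded Ω)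
    {u₁ u₂ : EuclideanSpace ℝ (Fin N) → ℝ}
    (h₁ : IsExtLaneEmdenSolution q Ω u₁) (h₂ : IsExtLaneEmdenSolution q Ω u₂) :
    u₁ = u₂ :=
  lane_emden_uniqueness_general hq1 hq2 hΩo hΩb h₁ h₂
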